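/- The polynomial p(x₀,x₁,x₂) = 2x₀²x₁ − (x₀² + 3x₁²)x₂ is not hyperbolic with respect to any direction: for every e ∈ ℝ³ with p(e) ≠ 0, there exists x ∈ ℝ³ such that the one-variable polynomial t ↦ p(x − t·e) has a non-real zero. -/

import Mathlib

open MvPolynomial Polynomial

/-- The one-variable complex polynomial `t ↦ P(x - t·e)` for `P ∈ ℝ[x₀,…,x_{N-1}]`. -/
noncomputable def linePoly {N : ℕ} (p : MvPolynomial (Fin N) ℝ) (x e : Fin N → ℝ) :
    Polynomial ℂ :=
  MvPolynomial.aeval (fun i => Polynomial.C (x i : ℂ) - Polynomial.C (e i : ℂ) * Polynomial.X) p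

/-- The example polynomial `p(x₀,x₁,x₂) = 2x₀²x₁ − (x₀² + 3x₁²)x₂`. -/
noncomputable def examplePoly : MvPolynomial (Fin 3) ℝ :=
  2 * X 0 ^ 2 * X 1 - (X 0 ^ 2 + 3 * X 1 ^ 2) * X 2

/-!
It suffices to find a real `x` with `p(x + i e) = 0`, for then `-i` is a root of
`t ↦ p(x - t e)`. Write `e = (a, b, c)` and `p = A(x₀, x₁) - B(x₀, x₁) x₂` with
`B = x₀² + 3x₁²`. For real `y = (y₀, y₁)` put `z = (y₀ + a i, y₁ + b i)`; wherever `B(z) ≠ 0`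
the equation `p(z, w + c i) = 0` has a real solution `w` exactly when
`Im (conj B(z) · (A(z) - c i B(z))) = 0`. This real function of `y` is continuous on the plane
minus the two zeros of `y ↦ B(z)`, which is connected, and it changes sign across the zero
`(-√3 b, √3 a / 3)`, since `B` vanishes there to first order while `A` does not vanish;
the intermediate value theorem gives the required `y`.
-/

open Complex ComplexConjugate

theorem MvPolynomial.IsHomogeneous.eval_smul {σ R : Type*} [CommSemiring R] [Fintype σ]
    {p : MvPolynomial σ R} {n : ℕ} (hp : p.IsHomogeneous n) (t : R) (x : σ → R) :
    eval (t • x) p = t ^ n * eval x p := by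
  simp only [eval_eq', Finset.mul_sum]
  refine Finset.sum_congr rfl fun d hd => ?_
  rw [hp.degree_eq_sum_deg_support hd, ← Finset.prod_pow_eq_pow_sum,
    Finset.prod_subset d.support.subset_univ fun i _ hi => by
      simp [Finsupp.notMem_support_iff.mp hi]]
  simp only [Pi.smul_apply, smul_eq_mul, mul_pow, Finset.prod_mul_distrib]
  ring

theorem linePoly_eval {N : ℕ} (p : MvPolynomial (Fin N) ℝ) (x e : Fin N → ℝ) (t : ℂ) :
    (linePoly p x e).eval t = aeval (fun i => (x i : ℂ) - t * e i) p := by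
  rw [linePoly, ← Polynomial.coe_aeval_eq_eval, ← AlgHom.restrictScalars_apply ℝ,
    MvPolynomial.comp_aeval_apply]
  congr 1
  ext i
  simp only [AlgHom.restrictScalars_apply, map_sub, map_mul, Polynomial.aeval_C, Polynomial.aeval_X]
  simp only [Algebra.algebraMap_self, RingHom.id_apply, MvPolynomial.aeval_X, sub_right_inj]
  ring

theorem linePoly_eval_ofReal {N : ℕ} (p : MvPolynomial (Fin N) ℝ) (x e : Fin N → ℝ) (t : ℝ) :
    (linePoly p x e).eval (t : ℂ) = eval (x - t • e) p := by
  rw [linePoly_eval, ← MvPolynomial.coe_aeval_eq_eval]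
  convert MvPolynomial.aeval_algebraMap_apply (B := ℂ) (x - t • e) p using 2
  · ext i
    simp
  · rfl

theorem linePoly_ne_zero {N n : ℕ} {p : MvPolynomial (Fin N) ℝ} (hp : p.IsHomogeneous n)
    {e : Fin N → ℝ} (he : eval e p ≠ 0) (x : Fin N → ℝ) : linePoly p x e ≠ 0 := by
  intro h
  have hline (t : ℝ) : eval (x - t • e) p = 0 := by
    have := linePoly_eval_ofReal p x e t
    rwa [h, Polynomial.eval_zero, eq_comm, ofReal_eq_zero] at this
  have hcont : Continuous fun s : ℝ => eval (s • x - e) p :=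
    (continuous_eval p).comp (by fun_prop)
  have hzero : (fun s : ℝ => eval (s • x - e) p) = fun _ => 0 := by
    refine hcont.ext_on (dense_compl_singleton 0) continuous_const fun s hs => ?_
    have : s • x - e = s • (x - s⁻¹ • e) := by
      rw [smul_sub, smul_smul, mul_inv_cancel₀ hs, one_smul]
    simp [this, hp.eval_smul, hline]
  have h0 := congrFun hzero 0
  rw [zero_smul, zero_sub, ← neg_one_smul ℝ e, hp.eval_smul] at h0
  simp_all

theorem exists_nonreal_root_linePoly {N n : ℕ} {p : MvPolynomial (Fin N) ℝ}
    (hp : p.IsHomogeneous n) {e : Fin N → ℝ} (he : eval e p ≠ 0) {x : Fin N → ℝ}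
    (hx : aeval (fun i => (x i : ℂ) + I * e i) p = 0) :
    ∃ z ∈ (linePoly p x e).roots, z.im ≠ 0 :=
  ⟨-I, (mem_roots (linePoly_ne_zero hp he x)).2 (by simpa [IsRoot, linePoly_eval] using hx),
    by simp⟩

theorem Complex.exists_eq_mul_ofReal_of_im_conj_mul_eq_zero {B Q : ℂ} (hB : B ≠ 0)
    (h : (conj B * Q).im = 0) : ∃ w : ℝ, Q = B * w := by
  have him : (Q / B).im = 0 := by
    rw [div_im, div_sub_div_same, ← zero_div (normSq B), ← h, mul_im, conj_re, conj_im]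
    ring
  have hreal : ((Q / B).re : ℂ) = Q / B := Complex.ext (by simp) (by simp [him])
  exact ⟨(Q / B).re, by rw [hreal, mul_div_cancel₀ _ hB]⟩

theorem exists_eq_mul_ofReal_of_sign_change {E : Type*} [NormedAddCommGroup E] [NormedSpace ℝ E]
    (hE : 1 < Module.rank ℝ E) {B Q : E → ℂ} (hB : Continuous B) (hQ : Continuous Q)
    (hZ : {y | B y = 0}.Countable) {u v : E} (hu : B u ≠ 0) (hv : B v ≠ 0)
    (hu' : (conj (B u) * Q u).im ≤ 0) (hv' : 0 ≤ (conj (B v) * Q v).im) :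
    ∃ y, B y ≠ 0 ∧ ∃ w : ℝ, Q y = B y * w := by
  obtain ⟨y, hy, hy0⟩ := (hZ.isConnected_compl_of_one_lt_rank hE).isPreconnected.intermediate_value
    (f := fun y => (conj (B y) * Q y).im) hu hv (by fun_prop) ⟨hu', hv'⟩
  exact ⟨y, hy, exists_eq_mul_ofReal_of_im_conj_mul_eq_zero hy hy0⟩

theorem exists_sign_change_of_simple_zero {E : Type*} [AddCommGroup E] [Module ℝ E]
    [TopologicalSpace E] [ContinuousAdd E] [ContinuousSMul ℝ E] {B Q : E → ℂ}
    (hQ : Continuous Q) {P d : E} {M : ℝ → ℂ} (hM : Continuous M)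
    (hBM : ∀ ε : ℝ, B (P + ε • d) = ε * M ε) (h0 : 0 < (conj (M 0) * Q P).im) :
    ∃ u v, B u ≠ 0 ∧ B v ≠ 0 ∧ (conj (B u) * Q u).im ≤ 0 ∧ 0 ≤ (conj (B v) * Q v).im := by
  set ω : ℝ → ℝ := fun ε => (conj (M ε) * Q (P + ε • d)).im
  have hω : Continuous ω := by fun_prop
  have hω0 : 0 < ω 0 := by simpa only [ω, zero_smul, add_zero] using h0
  obtain ⟨δ, hδ, hpos⟩ := Metric.eventually_nhds_iff.1
    (hω.continuousAt.eventually (lt_mem_nhds hω0))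
  have along (ε : ℝ) (hε : |ε| < δ) (hε0 : ε ≠ 0) : B (P + ε • d) ≠ 0 ∧
      (conj (B (P + ε • d)) * Q (P + ε • d)).im = ε * ω ε ∧ 0 < ω ε := by
    have hωε : 0 < ω ε := hpos (by simpa using hε)
    have hMε : M ε ≠ 0 := fun h => by simp [ω, h] at hωε
    exact ⟨by simp [hBM, hε0, hMε], by simp [ω, hBM, mul_assoc], hωε⟩
  have hδ2 : |δ / 2| < δ := by rw [abs_of_pos (by positivity)]; linarith
  obtain ⟨hu, hu', hωu⟩ := along (-(δ / 2)) (by rwa [abs_neg]) (by simp [hδ.ne'])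
  obtain ⟨hv, hv', hωv⟩ := along (δ / 2) hδ2 (by positivity)
  refine ⟨_, _, hu, hv, ?_, ?_⟩
  · rw [hu']
    exact mul_nonpos_of_nonpos_of_nonneg (by linarith) hωu.le
  · rw [hv']
    positivity

theorem examplePoly_isHomogeneous : examplePoly.IsHomogeneous 3 := by
  have h2 : IsHomogeneous (2 : MvPolynomial (Fin 3) ℝ) 0 := isHomogeneous_C _ 2
  have hX (i : Fin 3) : IsHomogeneous (X i : MvPolynomial (Fin 3) ℝ) 1 := isHomogeneous_X ℝ i
  have h3 : IsHomogeneous (3 : MvPolynomial (Fin 3) ℝ) 0 := isHomogeneous_C _ 3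
  exact ((h2.mul ((hX 0).pow 2)).mul (hX 1)).sub
    ((((hX 0).pow 2).add (h3.mul ((hX 1).pow 2))).mul (hX 2))

theorem aeval_examplePoly (z : Fin 3 → ℂ) :
    aeval z examplePoly = 2 * z 0 ^ 2 * z 1 - (z 0 ^ 2 + 3 * z 1 ^ 2) * z 2 := by
  simp [examplePoly]

theorem eval_examplePoly (y : Fin 3 → ℝ) :
    eval y examplePoly = 2 * y 0 ^ 2 * y 1 - (y 0 ^ 2 + 3 * y 1 ^ 2) * y 2 := by
  simp [examplePoly]

section QuadForm

variable (a b : ℝ)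

/-- The coefficient `z₀² + 3z₁²` of `x₂` in `examplePoly`, at `z = (y₀ + a i, y₁ + b i)`. -/
noncomputable def quadFormAt (y : ℝ × ℝ) : ℂ := (y.1 + a * I) ^ 2 + 3 * (y.2 + b * I) ^ 2

@[fun_prop]
theorem continuous_quadFormAt : Continuous (quadFormAt a b) := by
  unfold quadFormAt; fun_prop

theorem quadFormAt_add_smul (y d : ℝ × ℝ) (ε : ℝ) :
    quadFormAt a b (y + ε • d) = quadFormAt a b y +
      ε * (2 * ((y.1 + a * I) * d.1 + 3 * (y.2 + b * I) * d.2) + ε * (d.1 ^ 2 + 3 * d.2 ^ 2)) := by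
  simp only [quadFormAt, Prod.fst_add, Prod.snd_add, Prod.smul_fst, Prod.smul_snd, smul_eq_mul]
  push_cast
  ring

theorem quadFormAt_root : quadFormAt a b (-(√3 * b), √3 * a / 3) = 0 := by
  have hs : ((√3 : ℝ) : ℂ) ^ 2 = 3 := by exact_mod_cast Real.sq_sqrt (by norm_num : (0:ℝ) ≤ 3)
  simp only [quadFormAt]
  push_cast
  linear_combination (b ^ 2 + a ^ 2 / 3) * hs + (a ^ 2 + 3 * b ^ 2) * I_sq

theorem eq_or_eq_of_quadFormAt_eq_zero {y : ℝ × ℝ} (hy : quadFormAt a b y = 0) :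
    y = (-(√3 * b), √3 * a / 3) ∨ y = (√3 * b, -(√3 * a / 3)) := by
  have hs : √3 ^ 2 = 3 := Real.sq_sqrt (by norm_num)
  have hsC : ((√3 : ℝ) : ℂ) ^ 2 = 3 := by exact_mod_cast hs
  have hfac : quadFormAt a b y = (((y.1 + √3 * b : ℝ) : ℂ) + (a - √3 * y.2 : ℝ) * I) *
      (((y.1 - √3 * b : ℝ) : ℂ) + (a + √3 * y.2 : ℝ) * I) := by
    simp only [quadFormAt]
    push_cast
    linear_combination (b ^ 2 - y.2 ^ 2 - 2 * b * y.2 * I) * hsC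
      + (3 * b ^ 2 + √3 ^ 2 * y.2 ^ 2) * I_sq
  rw [hfac] at hy
  rcases mul_eq_zero.1 hy with h | h <;> simp [Complex.ext_iff] at h
  · left
    ext
    · linarith
    · linear_combination (-(√3) / 3) * h.2 + (-y.2 / 3) * hs
  · right
    ext
    · linarith
    · linear_combination (√3 / 3) * h.2 + (-y.2 / 3) * hs

theorem countable_setOf_quadFormAt_eq_zero : {y | quadFormAt a b y = 0}.Countable :=
  ((Set.toFinite {(-(√3 * b), √3 * a / 3), (√3 * b, -(√3 * a / 3))}).subset
    fun _ hy => eq_or_eq_of_quadFormAt_eq_zero a b hy).countable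

end QuadForm

theorem exists_examplePoly_root_with_im {a b : ℝ} (hab : 0 < a ^ 2 + 3 * b ^ 2) (c : ℝ) :
    ∃ y : ℝ × ℝ, ∃ w : ℝ,
      2 * (y.1 + a * I) ^ 2 * (y.2 + b * I) = quadFormAt a b y * (w + c * I) := by
  set Q : ℝ × ℝ → ℂ := fun y => 2 * (y.1 + a * I) ^ 2 * (y.2 + b * I) - quadFormAt a b y * (c * I)
  -- At `P` one has `z₀ = i√3 z₁`; the direction `d` is chosen to make `htransversal` hold.
  set P : ℝ × ℝ := (-(√3 * b), √3 * a / 3)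
  set d : ℝ × ℝ := (a ^ 2 - 3 * b ^ 2, -2 * a * b)
  set M : ℝ → ℂ := fun ε =>
    2 * ((P.1 + a * I) * d.1 + 3 * (P.2 + b * I) * d.2) + ε * (d.1 ^ 2 + 3 * d.2 ^ 2)
  have hline (ε : ℝ) : quadFormAt a b (P + ε • d) = ε * M ε := by
    rw [quadFormAt_add_smul, quadFormAt_root, zero_add]
  have htransversal : 0 < (conj (M 0) * Q P).im := by
    have hs : √3 ^ 2 = 3 := Real.sq_sqrt (by norm_num)
    have hP : quadFormAt a b P = 0 := quadFormAt_root a b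
    have hQP : Q P = 2 * (P.1 + a * I) ^ 2 * (P.2 + b * I) := by
      simp only [Q, hP, zero_mul, sub_zero]
    have him : (conj (M 0) * Q P).im = 4 * √3 / 3 * (a ^ 2 + 3 * b ^ 2) ^ 3 := by
      simp only [hQP, M, ofReal_zero, zero_mul, add_zero, pow_two, map_mul, map_add, map_ofNat,
        conj_ofReal, conj_I, mul_im, mul_re, add_re, add_im, neg_re, neg_im, ofReal_re, ofReal_im,
        I_re, I_im, re_ofNat, im_ofNat]
      simp only [P, d]
      linear_combination √3 * (20 / 3 * a ^ 4 * b ^ 2 - 8 * a ^ 2 * b ^ 4 + 12 * b ^ 6) * hs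
    rw [him]
    positivity
  obtain ⟨u, v, hu, hv, hu', hv'⟩ :=
    exists_sign_change_of_simple_zero (by fun_prop) (by fun_prop) hline htransversal
  obtain ⟨y, -, w, hw⟩ := exists_eq_mul_ofReal_of_sign_change (by norm_num)
    (continuous_quadFormAt a b) (by fun_prop) (countable_setOf_quadFormAt_eq_zero a b) hu hv hu' hv'
  exact ⟨y, w, by linear_combination hw⟩

/-- **Example (not hyperbolic).** `p(x₀,x₁,x₂) = 2x₀²x₁ − (x₀² + 3x₁²)x₂` is not hyperbolic
with respect to any direction: for every `e ∈ ℝ³` with `p(e) ≠ 0` there is an `x ∈ ℝ³` such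
that `t ↦ p(x − t·e)` has a non-real zero. -/
theorem examplePoly_not_hyperbolic :
    ∀ e : Fin 3 → ℝ, MvPolynomial.eval e examplePoly ≠ 0 →
      ∃ x : Fin 3 → ℝ, ∃ z ∈ (linePoly examplePoly x e).roots, z.im ≠ 0 := by
  intro e he
  have hab : 0 < e 0 ^ 2 + 3 * e 1 ^ 2 := by
    refine lt_of_le_of_ne (by positivity) fun h => he ?_
    have h0 : e 0 ^ 2 = 0 := by nlinarith [sq_nonneg (e 0), sq_nonneg (e 1)]
    rw [eval_examplePoly]
    linear_combination (2 * e 1) * h0 + e 2 * h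
  obtain ⟨y, w, hw⟩ := exists_examplePoly_root_with_im hab (e 2)
  refine ⟨![y.1, y.2, w], exists_nonreal_root_linePoly examplePoly_isHomogeneous he ?_⟩
  rw [aeval_examplePoly]
  simp only [quadFormAt] at hw
  simp only [Matrix.cons_val_zero, Matrix.cons_val_one, Matrix.cons_val]
  linear_combination hw
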